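/- arXiv:0902.4373 — 4 statements merged into one kernel-verified Lean document; each statement's English description precedes it below -/
import Mathlib

section
/- Let K ⊂ L²(0,1) be the closed convex cone of nondecreasing functions. Then the projection Proj_K is a contraction with respect to every L^p norm, 1 ≤ p ≤ ∞: ‖Proj_K(f) - Proj_K(h)‖_{L^p(0,1)} ≤ ‖f - h‖_{L^p(0,1)} whenever f, h ∈ L²(0,1) ∩ L^p(0,1). -/
open MeasureTheory Set Filter

noncomputable section

/-- Lebesgue measure restricted to the interval (0,1). -/
def μ01 : MeasureTheory.Measure ℝ := MeasureTheory.volume.restrict (Set.Ioo 0 1)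

/-- The convex cone `K` of (essentially) nondecreasing functions in L²(0,1). -/
def coneK : Set (ℝ → ℝ) := {g | MonotoneOn g (Set.Ioo 0 1) ∧ MeasureTheory.MemLp g 2 μ01}

/-- `g` is the L²(0,1)-orthogonal projection of `f` onto the cone `K`,
characterized by the variational inequality `⟨f - g, z - g⟩ ≤ 0` for all `z ∈ K`. -/
def IsProjK (f g : ℝ → ℝ) : Prop :=
  g ∈ coneK ∧ ∀ z ∈ coneK, (∫ w in Set.Ioo (0:ℝ) 1, (f w - g w) * (z w - g w)) ≤ 0

/-- The convex envelope of `F` on `[0,1]`: the supremum of affine functions below `F` there. -/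
def convEnv (F : ℝ → ℝ) (w : ℝ) : ℝ :=
  sSup {y | ∃ a b : ℝ, y = a + b * w ∧ ∀ v ∈ Set.Icc (0:ℝ) 1, a + b * v ≤ F v}

/-- The open set `Ω_g ⊆ (0,1)` of points near which `g` is essentially constant. -/
def locConstSet (g : ℝ → ℝ) : Set ℝ :=
  {w | w ∈ Set.Ioo (0:ℝ) 1 ∧ ∃ a b c : ℝ, a < w ∧ w < b ∧
    ∀ᵐ x ∂μ01, x ∈ Set.Ioo a b → g x = c}

/-- The closed subspace `H_g` of L²(0,1) functions essentially constant on each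
open interval contained in `Ω_g`. -/
def Hspace (g : ℝ → ℝ) : Set (ℝ → ℝ) :=
  {u | MeasureTheory.MemLp u 2 μ01 ∧ ∀ a b : ℝ, Set.Ioo a b ⊆ locConstSet g →
    ∃ c : ℝ, ∀ᵐ x ∂μ01, x ∈ Set.Ioo a b → u x = c}

/-- `ξ` belongs to the subdifferential `∂I_K(g)` of the indicator function of `K` at `g ∈ K`. -/
def subdiffIK (g ξ : ℝ → ℝ) : Prop :=
  g ∈ coneK ∧ ∀ z ∈ coneK, (∫ w in Set.Ioo (0:ℝ) 1, ξ w * (z w - g w)) ≤ 0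

/-!
Fix `τ` and `s > 0` and put `w = min ((g₁ - g₂ - τ)⁺) s`. The functions `g₁ - w` and `g₂ + w` are
lattice combinations of `g₁`, `g₂` and constants, hence nondecreasing, so they may be tested in the
variational inequalities of `g₁` and `g₂`; adding the two gives `∫ (f - h - (g₁ - g₂)) w ≥ 0`.
Since `s (g₁ - g₂ - τ)⁺ - s² ≤ (g₁ - g₂ - τ) w`, letting `s → 0` yields the majorization
`∫ (g₁ - g₂ - τ)⁺ ≤ ∫ (f - h - τ)⁺` for every `τ`, and the same with the roles of the pairs swapped.
Every convex function `y ↦ (y⁺)^r` with `r > 1` is a superposition of the hinges `y ↦ (y - τ)⁺`,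
namely `(y⁺)^r = r (r - 1) ∫_{τ > 0} τ^(r-2) (y - τ)⁺ dτ`, so the majorization gives the `Lᵖ` bound
for `p < ∞`; for `p = ∞` take `τ = ‖f - h‖_∞`.
-/

open scoped ENNReal

section Majorization

variable {α : Type*} [MeasurableSpace α] {μ : Measure α}

lemma integral_Ioc_rpow_mul_sub {r y : ℝ} (hr : 1 < r) (hy : 0 ≤ y) :
    ∫ τ in Ioc 0 y, τ ^ (r - 2) * (y - τ) = y ^ r / (r * (r - 1)) := by
  have i₁ : IntervalIntegrable (fun τ : ℝ => y * τ ^ (r - 2)) volume 0 y :=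
    (intervalIntegral.intervalIntegrable_rpow' (by linarith)).const_mul y
  have i₂ : IntervalIntegrable (fun τ : ℝ => τ ^ (r - 1)) volume 0 y :=
    intervalIntegral.intervalIntegrable_rpow' (by linarith)
  have hpow : ∀ τ ∈ Ioc (0:ℝ) y, y * τ ^ (r - 2) - τ ^ (r - 1) = τ ^ (r - 2) * (y - τ) := by
    intro τ hτ
    rw [show r - 1 = (r - 2) + 1 by ring, Real.rpow_add_one hτ.1.ne']
    ring
  have hy_pow : y * y ^ (r - 1) = y ^ r := by
    rw [← Real.rpow_one_add' hy (by linarith), add_sub_cancel]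
  rw [← setIntegral_congr_fun measurableSet_Ioc hpow, ← intervalIntegral.integral_of_le hy,
    intervalIntegral.integral_sub i₁ i₂, intervalIntegral.integral_const_mul,
    integral_rpow (Or.inl (by linarith)), integral_rpow (Or.inl (by linarith)),
    Real.zero_rpow (by linarith), Real.zero_rpow (by linarith), show r - 2 + 1 = r - 1 by ring,
    show r - 1 + 1 = r by ring, sub_zero, sub_zero, mul_div_assoc', hy_pow]
  have : r - 1 ≠ 0 := by linarith
  have : r ≠ 0 := by linarith
  field_simp
  ring

lemma ofReal_mul_lintegral_Ioi_rpow_mul_sub {r : ℝ} (hr : 1 < r) (y : ℝ) :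
    ENNReal.ofReal (r * (r - 1)) *
        ∫⁻ τ in Ioi 0, ENNReal.ofReal (τ ^ (r - 2)) * ENNReal.ofReal (y - τ) =
      ENNReal.ofReal y ^ r := by
  have hzero : ∀ τ ∈ Ioi y, ENNReal.ofReal (τ ^ (r - 2)) * ENNReal.ofReal (y - τ) = 0 :=
    fun τ hτ => by rw [ENNReal.ofReal_of_nonpos (p := y - τ) (by linarith [mem_Ioi.mp hτ]),
      mul_zero]
  rcases le_total y 0 with hy | hy
  · rw [setLIntegral_congr_fun measurableSet_Ioi fun τ hτ => hzero τ (hy.trans_lt hτ),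
      lintegral_zero, mul_zero, ENNReal.ofReal_of_nonpos hy, ENNReal.zero_rpow_of_pos (by linarith)]
  have hmul : ∀ τ ∈ Ioc 0 y, ENNReal.ofReal (τ ^ (r - 2)) * ENNReal.ofReal (y - τ) =
      ENNReal.ofReal (τ ^ (r - 2) * (y - τ)) :=
    fun τ hτ => (ENNReal.ofReal_mul (Real.rpow_nonneg hτ.1.le _)).symm
  have hint : IntegrableOn (fun τ => τ ^ (r - 2) * (y - τ)) (Ioc 0 y) :=
    ((intervalIntegral.intervalIntegrable_rpow' (by linarith)).mul_continuousOn
      (continuousOn_const.sub continuousOn_id)).1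
  rw [← Ioc_union_Ioi_eq_Ioi hy, lintegral_union measurableSet_Ioi (Ioc_disjoint_Ioi le_rfl),
    setLIntegral_congr_fun measurableSet_Ioi hzero, lintegral_zero, add_zero,
    setLIntegral_congr_fun measurableSet_Ioc hmul, ← ofReal_integral_eq_lintegral_ofReal hint
      ((ae_restrict_iff' measurableSet_Ioc).2 (Eventually.of_forall fun τ hτ =>
        mul_nonneg (Real.rpow_nonneg hτ.1.le _) (sub_nonneg.2 hτ.2))),
    integral_Ioc_rpow_mul_sub hr hy, ← ENNReal.ofReal_mul (by nlinarith),
    mul_div_cancel₀ _ (by nlinarith), ENNReal.ofReal_rpow_of_nonneg hy (by linarith)]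

lemma lintegral_ofReal_rpow_eq_lintegral_Ioi [SFinite μ] {v : α → ℝ} (hv : AEMeasurable v μ)
    {r : ℝ} (hr : 1 < r) :
    ∫⁻ x, ENNReal.ofReal (v x) ^ r ∂μ = ENNReal.ofReal (r * (r - 1)) *
      ∫⁻ τ in Ioi 0, ENNReal.ofReal (τ ^ (r - 2)) * ∫⁻ x, ENNReal.ofReal (v x - τ) ∂μ := by
  simp_rw [← ofReal_mul_lintegral_Ioi_rpow_mul_sub hr (v _),
    ← lintegral_const_mul' _ _ ENNReal.ofReal_ne_top]
  rw [lintegral_lintegral_swap]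
  have := hv.comp_fst (ν := volume.restrict (Ioi (0:ℝ)))
  unfold Function.uncurry
  fun_prop

lemma lintegral_ofReal_rpow_le_of_lintegral_ofReal_sub_le [SFinite μ] {d u : α → ℝ}
    (hd : AEMeasurable d μ) (hu : AEMeasurable u μ)
    (h : ∀ τ, 0 ≤ τ → ∫⁻ x, ENNReal.ofReal (d x - τ) ∂μ ≤ ∫⁻ x, ENNReal.ofReal (u x - τ) ∂μ)
    {r : ℝ} (hr : 1 ≤ r) :
    ∫⁻ x, ENNReal.ofReal (d x) ^ r ∂μ ≤ ∫⁻ x, ENNReal.ofReal (u x) ^ r ∂μ := by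
  rcases hr.eq_or_lt with rfl | hr
  · simpa using h 0 le_rfl
  rw [lintegral_ofReal_rpow_eq_lintegral_Ioi hd hr, lintegral_ofReal_rpow_eq_lintegral_Ioi hu hr]
  refine mul_le_mul_right (setLIntegral_mono' measurableSet_Ioi fun τ hτ => ?_) _
  exact mul_le_mul_right (h τ (le_of_lt hτ)) _

lemma ae_le_of_lintegral_ofReal_sub_le {d u : α → ℝ} {M : ℝ} (hd : AEMeasurable d μ)
    (h : ∫⁻ x, ENNReal.ofReal (d x - M) ∂μ ≤ ∫⁻ x, ENNReal.ofReal (u x - M) ∂μ)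
    (hu : ∀ᵐ x ∂μ, u x ≤ M) : ∀ᵐ x ∂μ, d x ≤ M := by
  have hu0 : ∫⁻ x, ENNReal.ofReal (u x - M) ∂μ = 0 :=
    lintegral_eq_zero_of_ae_eq_zero <| hu.mono fun x hx => ENNReal.ofReal_of_nonpos (by linarith)
  have hd0 := (lintegral_eq_zero_iff' (by fun_prop)).1 (nonpos_iff_eq_zero.1 (hu0 ▸ h))
  filter_upwards [hd0] with x hx
  simpa [sub_nonpos] using hx

lemma enorm_rpow_eq_ofReal_rpow_add {r : ℝ} (hr : 0 < r) (y : ℝ) :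
    ‖y‖ₑ ^ r = ENNReal.ofReal y ^ r + ENNReal.ofReal (-y) ^ r := by
  rw [Real.enorm_eq_ofReal_abs]
  rcases le_total 0 y with hy | hy
  · rw [abs_of_nonneg hy, ENNReal.ofReal_of_nonpos (neg_nonpos.2 hy),
      ENNReal.zero_rpow_of_pos hr, add_zero]
  · rw [abs_of_nonpos hy, ENNReal.ofReal_of_nonpos hy, ENNReal.zero_rpow_of_pos hr, zero_add]

theorem eLpNorm_le_of_lintegral_ofReal_sub_le [SFinite μ] {d u : α → ℝ} {p : ℝ≥0∞} (hp : 1 ≤ p)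
    (hd : AEMeasurable d μ) (hu : AEMeasurable u μ)
    (hpos : ∀ τ, 0 ≤ τ → ∫⁻ x, ENNReal.ofReal (d x - τ) ∂μ ≤ ∫⁻ x, ENNReal.ofReal (u x - τ) ∂μ)
    (hneg : ∀ τ, 0 ≤ τ →
      ∫⁻ x, ENNReal.ofReal (-d x - τ) ∂μ ≤ ∫⁻ x, ENNReal.ofReal (-u x - τ) ∂μ) :
    eLpNorm d p μ ≤ eLpNorm u p μ := by
  rcases eq_or_ne p ∞ with rfl | hp_top
  · rw [eLpNorm_exponent_top, eLpNorm_exponent_top]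
    rcases eq_or_ne (eLpNormEssSup u μ) ∞ with hu_top | hu_top
    · exact hu_top ▸ le_top
    set M := (eLpNormEssSup u μ).toReal
    have hu_abs : ∀ᵐ x ∂μ, |u x| ≤ M := ae_le_eLpNormEssSup.mono fun x hx => by
      simpa [Real.norm_eq_abs] using ENNReal.toReal_mono hu_top hx
    have hM : 0 ≤ M := ENNReal.toReal_nonneg
    have hd_le := ae_le_of_lintegral_ofReal_sub_le hd (hpos M hM)
      (hu_abs.mono fun x hx => (abs_le.1 hx).2)
    have hd_ge := ae_le_of_lintegral_ofReal_sub_le hd.neg (hneg M hM)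
      (hu_abs.mono fun x hx => by linarith [(abs_le.1 hx).1])
    calc eLpNormEssSup d μ ≤ ENNReal.ofReal M := eLpNormEssSup_le_of_ae_bound <| by
          filter_upwards [hd_le, hd_ge] with x h₁ h₂
          exact abs_le.2 ⟨by linarith [show -d x ≤ M from h₂], h₁⟩
      _ = eLpNormEssSup u μ := ENNReal.ofReal_toReal hu_top
  · have hp_zero : p ≠ 0 := (zero_lt_one.trans_le hp).ne'
    have hr : 1 ≤ p.toReal := by simpa using ENNReal.toReal_mono hp_top hp
    simp_rw [eLpNorm_eq_lintegral_rpow_enorm_toReal hp_zero hp_top,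
      enorm_rpow_eq_ofReal_rpow_add (zero_lt_one.trans_le hr)]
    gcongr ?_ ^ _
    rw [lintegral_add_left' (by fun_prop), lintegral_add_left' (by fun_prop)]
    exact add_le_add (lintegral_ofReal_rpow_le_of_lintegral_ofReal_sub_le hd hu hpos hr)
      (lintegral_ofReal_rpow_le_of_lintegral_ofReal_sub_le hd.neg hu.neg hneg hr)

end Majorization

instance isFiniteMeasure_μ01 : IsFiniteMeasure μ01 := ⟨by simp [μ01]⟩

lemma measureReal_μ01_univ : μ01.real univ = 1 := by simp [μ01]

lemma min_max_eq_sub {a b τ s : ℝ} (hs : 0 ≤ s) :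
    min a (max (b + τ) (a - s)) = a - min (max (a - b - τ) 0) s := by
  simp only [min_def, max_def]; split_ifs <;> linarith

lemma max_min_eq_add {a b τ s : ℝ} (hs : 0 ≤ s) :
    max b (min (a - τ) (b + s)) = b + min (max (a - b - τ) 0) s := by
  simp only [min_def, max_def]; split_ifs <;> linarith

lemma mul_max_sub_sub_sq_add_le {d u τ s : ℝ} (hs : 0 ≤ s) :
    s * max (d - τ) 0 - s ^ 2 + (u - d) * min (max (d - τ) 0) s ≤ s * max (u - τ) 0 := by
  simp only [min_def, max_def]; split_ifs <;> nlinarith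

lemma MeasureTheory.MemLp.integrable_max_sub_const {α : Type*} [MeasurableSpace α]
    {μ : Measure α} [IsFiniteMeasure μ] {v : α → ℝ} {p : ℝ≥0∞} (hv : MemLp v p μ) (hp : 1 ≤ p)
    (τ : ℝ) : Integrable (fun x => max (v x - τ) 0) μ :=
  ((hv.sub (memLp_const τ)).sup (memLp_const 0)).integrable hp

namespace IsProjK

variable {f h g₁ g₂ : ℝ → ℝ}

lemma memLp {g : ℝ → ℝ} (hg : IsProjK f g) : MemLp g 2 μ01 := hg.1.2

lemma integral_mul_min_posPart_nonneg (hf : MemLp f 2 μ01) (hh : MemLp h 2 μ01)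
    (h₁ : IsProjK f g₁) (h₂ : IsProjK h g₂) (τ : ℝ) {s : ℝ} (hs : 0 ≤ s) :
    0 ≤ ∫ x, (f x - h x - (g₁ x - g₂ x)) * min (max (g₁ x - g₂ x - τ) 0) s ∂μ01 := by
  set w : ℝ → ℝ := fun x => min (max (g₁ x - g₂ x - τ) 0) s
  have hw : MemLp w 2 μ01 :=
    (((h₁.memLp.sub h₂.memLp).sub (memLp_const τ)).sup (memLp_const 0)).inf (memLp_const s)
  have hz₁ : (fun x => g₁ x - w x) ∈ coneK := by
    have hmono := h₁.1.1
    simp only [w, ← min_max_eq_sub hs]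
    refine ⟨hmono.min ((h₂.1.1.add_const τ).max ?_), ?_⟩
    · simpa only [sub_eq_add_neg] using hmono.add_const (-s)
    · exact h₁.memLp.inf ((h₂.memLp.add (memLp_const τ)).sup (h₁.memLp.sub (memLp_const s)))
  have hz₂ : (fun x => g₂ x + w x) ∈ coneK := by
    have hmono := h₂.1.1
    simp only [w, ← max_min_eq_add hs]
    refine ⟨hmono.max (MonotoneOn.min ?_ (hmono.add_const s)), ?_⟩
    · simpa only [sub_eq_add_neg] using h₁.1.1.add_const (-τ)
    · exact h₂.memLp.sup ((h₁.memLp.sub (memLp_const τ)).inf (h₂.memLp.add (memLp_const s)))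
  have vi₁ : ∫ x, (f x - g₁ x) * (g₁ x - w x - g₁ x) ∂μ01 ≤ 0 := h₁.2 _ hz₁
  have vi₂ : ∫ x, (h x - g₂ x) * (g₂ x + w x - g₂ x) ∂μ01 ≤ 0 := h₂.2 _ hz₂
  simp only [sub_sub_cancel_left, add_sub_cancel_left, mul_neg, integral_neg,
    neg_nonpos] at vi₁ vi₂
  have e : ∫ x, (f x - h x - (g₁ x - g₂ x)) * w x ∂μ01 =
      ∫ x, (f x - g₁ x) * w x ∂μ01 - ∫ x, (h x - g₂ x) * w x ∂μ01 := by
    have i₁ : Integrable (fun x => (f x - g₁ x) * w x) μ01 := (hf.sub h₁.memLp).integrable_mul hw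
    have i₂ : Integrable (fun x => (h x - g₂ x) * w x) μ01 := (hh.sub h₂.memLp).integrable_mul hw
    rw [← integral_sub i₁ i₂]
    exact integral_congr_ae (Eventually.of_forall fun x => by ring)
  rw [e]
  linarith

lemma integral_posPart_sub_le (hf : MemLp f 2 μ01) (hh : MemLp h 2 μ01)
    (h₁ : IsProjK f g₁) (h₂ : IsProjK h g₂) (τ : ℝ) :
    ∫ x, max (g₁ x - g₂ x - τ) 0 ∂μ01 ≤ ∫ x, max (f x - h x - τ) 0 ∂μ01 := by
  have hd : MemLp (fun x => g₁ x - g₂ x) 2 μ01 := h₁.memLp.sub h₂.memLp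
  have hu : MemLp (fun x => f x - h x) 2 μ01 := hf.sub hh
  refine le_of_forall_pos_le_add fun s hs => ?_
  have hw : MemLp (fun x => min (max (g₁ x - g₂ x - τ) 0) s) 2 μ01 :=
    ((hd.sub (memLp_const τ)).sup (memLp_const 0)).inf (memLp_const s)
  have i_d : Integrable (fun x => s * max (g₁ x - g₂ x - τ) 0) μ01 :=
    (hd.integrable_max_sub_const one_le_two τ).const_mul s
  have i_ds : Integrable (fun x => s * max (g₁ x - g₂ x - τ) 0 - s ^ 2) μ01 :=
    i_d.sub (integrable_const _)
  have i_u : Integrable (fun x => s * max (f x - h x - τ) 0) μ01 :=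
    (hu.integrable_max_sub_const one_le_two τ).const_mul s
  have i_w : Integrable
      (fun x => (f x - h x - (g₁ x - g₂ x)) * min (max (g₁ x - g₂ x - τ) 0) s) μ01 :=
    (hu.sub hd).integrable_mul hw
  have integrated : s * ∫ x, max (g₁ x - g₂ x - τ) 0 ∂μ01 - s ^ 2 +
      ∫ x, (f x - h x - (g₁ x - g₂ x)) * min (max (g₁ x - g₂ x - τ) 0) s ∂μ01 ≤
      s * ∫ x, max (f x - h x - τ) 0 ∂μ01 := calc
    _ = ∫ x, (s * max (g₁ x - g₂ x - τ) 0 - s ^ 2 +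
          (f x - h x - (g₁ x - g₂ x)) * min (max (g₁ x - g₂ x - τ) 0) s) ∂μ01 := by
      rw [integral_add i_ds i_w, integral_sub i_d (integrable_const _),
        integral_const_mul, integral_const, measureReal_μ01_univ, one_smul]
    _ ≤ ∫ x, s * max (f x - h x - τ) 0 ∂μ01 :=
      integral_mono (i_ds.add i_w) i_u fun x => mul_max_sub_sub_sq_add_le hs.le
    _ = _ := integral_const_mul _ _
  have hw_nonneg := integral_mul_min_posPart_nonneg hf hh h₁ h₂ τ hs.le
  exact le_of_mul_le_mul_left (by linarith) hs

lemma lintegral_ofReal_sub_le (hf : MemLp f 2 μ01) (hh : MemLp h 2 μ01)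
    (h₁ : IsProjK f g₁) (h₂ : IsProjK h g₂) (τ : ℝ) :
    ∫⁻ x, ENNReal.ofReal (g₁ x - g₂ x - τ) ∂μ01 ≤ ∫⁻ x, ENNReal.ofReal (f x - h x - τ) ∂μ01 := by
  have ofReal_posPart : ∀ y : ℝ, ENNReal.ofReal y = ENNReal.ofReal (max y 0) := fun y => by
    simp [ENNReal.ofReal_max]
  have hd : MemLp (fun x => g₁ x - g₂ x) 2 μ01 := h₁.memLp.sub h₂.memLp
  have hu : MemLp (fun x => f x - h x) 2 μ01 := hf.sub hh
  rw [lintegral_congr fun x => ofReal_posPart (g₁ x - g₂ x - τ),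
    lintegral_congr fun x => ofReal_posPart (f x - h x - τ),
    ← ofReal_integral_eq_lintegral_ofReal (hd.integrable_max_sub_const one_le_two τ)
      (Eventually.of_forall fun _ => le_max_right _ _),
    ← ofReal_integral_eq_lintegral_ofReal (hu.integrable_max_sub_const one_le_two τ)
      (Eventually.of_forall fun _ => le_max_right _ _)]
  exact ENNReal.ofReal_le_ofReal (integral_posPart_sub_le hf hh h₁ h₂ τ)

end IsProjK

theorem stmt5_general (f h g₁ g₂ : ℝ → ℝ) (p : ENNReal) (hp : 1 ≤ p)
    (hf : MeasureTheory.MemLp f 2 μ01) (hh : MeasureTheory.MemLp h 2 μ01)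
    (h₁ : IsProjK f g₁) (h₂ : IsProjK h g₂) :
    MeasureTheory.eLpNorm (fun w => g₁ w - g₂ w) p μ01 ≤
      MeasureTheory.eLpNorm (fun w => f w - h w) p μ01 := by
  refine eLpNorm_le_of_lintegral_ofReal_sub_le hp (h₁.memLp.sub h₂.memLp).aemeasurable
    (hf.sub hh).aemeasurable (fun τ _ => h₁.lintegral_ofReal_sub_le hf hh h₂ τ) fun τ _ => ?_
  simpa only [neg_sub] using h₂.lintegral_ofReal_sub_le hh hf h₁ τ

theorem stmt5 (f h g₁ g₂ : ℝ → ℝ) (p : ENNReal) (hp : 1 ≤ p)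
    (hf : MeasureTheory.MemLp f 2 μ01) (hh : MeasureTheory.MemLp h 2 μ01)
    (hfp : MeasureTheory.MemLp f p μ01) (hhp : MeasureTheory.MemLp h p μ01)
    (h₁ : IsProjK f g₁) (h₂ : IsProjK h g₂) :
    MeasureTheory.eLpNorm (fun w => g₁ w - g₂ w) p μ01 ≤
      MeasureTheory.eLpNorm (fun w => f w - h w) p μ01 :=
  stmt5_general f h g₁ g₂ p hp hf hh h₁ h₂
end
end

section
/- Let K ⊂ L²(0,1) be the closed convex cone of nondecreasing functions and ψ: ℝ → [0,+∞] convex and lower semicontinuous. Then for every f ∈ L²(0,1): ∫₀¹ ψ(Proj_K(f)) dw ≤ ∫₀¹ ψ(f) dw. -/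
open MeasureTheory Set Filter

noncomputable section

/-! Approximate `ψ` from below by its Moreau–Yosida envelopes `ψₙ x = inf_y ψ y + n (x - y)²`:
they are finite (unless `ψ ≡ ⊤`), convex, semiconcave (`n x² - ψₙ x` is convex), and increase to
`ψ` by lower semicontinuity, so monotone convergence reduces the claim to such a `φ = ψₙ`. Its
right derivative `s` is monotone and `2n`-Lipschitz, hence `g - ε (s ∘ g) ∈ K` for small `ε`, and
the variational inequality gives `∫ s(g) (f - g) ≥ 0`. Integrating the subgradient inequality
`φ g + s(g) (f - g) ≤ φ f` concludes. -/

open scoped NNReal ENNReal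

namespace ConvexOn

variable {φ : ℝ → ℝ}

lemma add_rightDeriv_mul_sub_le (hφ : ConvexOn ℝ univ φ) (t x : ℝ) :
    φ t + derivWithin φ (Ioi t) t * (x - t) ≤ φ x := by
  rcases lt_trichotomy x t with hxt | rfl | htx
  · have h := (hφ.slope_le_leftDeriv_of_mem_interior (mem_univ x) (by simp) hxt).trans
      (hφ.leftDeriv_le_rightDeriv_of_mem_interior (by simp))
    rw [slope_def_field, div_le_iff₀ (sub_pos.2 hxt)] at h
    linarith
  · simp
  · have h := hφ.rightDeriv_le_slope_of_mem_interior (by simp) (mem_univ x) htx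
    rw [slope_def_field, le_div_iff₀ (sub_pos.2 htx)] at h
    linarith

lemma monotone_rightDeriv (hφ : ConvexOn ℝ univ φ) :
    Monotone fun x => derivWithin φ (Ioi x) x := by
  simpa using hφ.monotoneOn_rightDeriv

variable {c : ℝ≥0}

lemma rightDeriv_sq_sub (hφ : ConvexOn ℝ univ φ) (t : ℝ) :
    derivWithin (fun x => c * x ^ 2 - φ x) (Ioi t) t = 2 * c * t - derivWithin φ (Ioi t) t := by
  have hsq : HasDerivWithinAt (fun x : ℝ => c * x ^ 2) (2 * c * t) (Ioi t) t := by
    simpa [mul_comm, mul_left_comm, mul_assoc] using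
      ((hasDerivAt_pow 2 t).const_mul (c : ℝ)).hasDerivWithinAt
  exact (hsq.sub (hφ.hasDerivWithinAt_rightDeriv_of_mem_interior (by simp))).derivWithin
    (uniqueDiffWithinAt_Ioi t)

lemma le_add_rightDeriv_mul_sub_add_sq (hφ : ConvexOn ℝ univ φ)
    (hφc : ConvexOn ℝ univ fun x => c * x ^ 2 - φ x) (t x : ℝ) :
    φ x ≤ φ t + derivWithin φ (Ioi t) t * (x - t) + c * (x - t) ^ 2 := by
  have h := hφc.add_rightDeriv_mul_sub_le t x
  rw [rightDeriv_sq_sub hφ] at h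
  nlinarith

lemma lipschitzWith_rightDeriv (hφ : ConvexOn ℝ univ φ)
    (hφc : ConvexOn ℝ univ fun x => c * x ^ 2 - φ x) :
    LipschitzWith (2 * c) fun x => derivWithin φ (Ioi x) x := by
  have hle : ∀ a b : ℝ, a ≤ b →
      |derivWithin φ (Ioi b) b - derivWithin φ (Ioi a) a| ≤ 2 * c * |b - a| := by
    intro a b hab
    have h := hφc.monotone_rightDeriv hab
    simp only [rightDeriv_sq_sub hφ] at h
    rw [abs_of_nonneg (sub_nonneg.2 (hφ.monotone_rightDeriv hab)), abs_of_nonneg (sub_nonneg.2 hab)]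
    linarith
  refine LipschitzWith.of_dist_le_mul fun a b => ?_
  simp only [Real.dist_eq, NNReal.coe_mul, NNReal.coe_ofNat]
  rcases le_total a b with hab | hba
  · rw [abs_sub_comm, abs_sub_comm a]; exact hle a b hab
  · exact hle b a hba

end ConvexOn

instance : IsFiniteMeasure μ01 :=
  ⟨by simp [μ01, Real.volume_Ioo]⟩

lemma LipschitzWith.comp_memLp_of_isFiniteMeasure {α : Type*} [MeasurableSpace α]
    {μ : Measure α} [IsFiniteMeasure μ] {p : ℝ≥0∞} {K : ℝ≥0} {s : ℝ → ℝ} {u : α → ℝ}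
    (hs : LipschitzWith K s) (hu : MemLp u p μ) : MemLp (s ∘ u) p μ := by
  have h := ((hs.sub (LipschitzWith.const (s 0))).comp_memLp (by simp) hu).add
    (memLp_const (s 0))
  convert h using 1
  ext w
  simp

lemma ConvexOn.integrable_comp {α : Type*} [MeasurableSpace α] {μ : Measure α}
    [IsFiniteMeasure μ] {φ : ℝ → ℝ} {c : ℝ≥0} (hφ : ConvexOn ℝ univ φ)
    (hφc : ConvexOn ℝ univ fun x => c * x ^ 2 - φ x) {u : α → ℝ} (hu : MemLp u 2 μ) :
    Integrable (fun a => φ (u a)) μ := by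
  set s₀ := derivWithin φ (Ioi 0) 0
  have hbound : ∀ x, |φ x| ≤ |φ 0| + |s₀| * |x| + c * x ^ 2 := by
    intro x
    have hlo := hφ.add_rightDeriv_mul_sub_le 0 x
    have hhi := hφ.le_add_rightDeriv_mul_sub_add_sq hφc 0 x
    simp only [sub_zero] at hlo hhi
    have h1 := neg_abs_le (φ 0)
    have h2 := le_abs_self (φ 0)
    have h3 := abs_mul s₀ x ▸ neg_abs_le (s₀ * x)
    have h4 := abs_mul s₀ x ▸ le_abs_self (s₀ * x)
    have h5 : 0 ≤ (c : ℝ) * x ^ 2 := by positivity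
    rw [abs_le]
    constructor <;> linarith
  have hcont : Continuous φ := by
    simpa [continuousOn_univ] using hφ.continuousOn isOpen_univ
  refine Integrable.mono' (((integrable_const |φ 0|).add
      ((hu.integrable one_le_two).norm.const_mul |s₀|)).add (hu.integrable_sq.const_mul c))
    (hcont.comp_aestronglyMeasurable hu.aestronglyMeasurable) (ae_of_all _ fun w => ?_)
  simpa using hbound (u w)

lemma monotone_sub_mul_of_lipschitzWith {s : ℝ → ℝ} {K : ℝ≥0} (hs : LipschitzWith K s)
    {ε : ℝ} (hε : 0 ≤ ε) (hεK : ε * K ≤ 1) : Monotone fun x => x - ε * s x := by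
  intro a b hab
  have h := hs.dist_le_mul b a
  rw [Real.dist_eq, Real.dist_eq, abs_of_nonneg (sub_nonneg.2 hab)] at h
  have h' : ε * (s b - s a) ≤ ε * (K * (b - a)) :=
    mul_le_mul_of_nonneg_left ((le_abs_self _).trans h) hε
  have h'' : ε * K * (b - a) ≤ 1 * (b - a) :=
    mul_le_mul_of_nonneg_right hεK (sub_nonneg.2 hab)
  show a - ε * s a ≤ b - ε * s b
  nlinarith

/-- For small `ε > 0` the map `x ↦ x - ε s x` is monotone, so `g - ε (s ∘ g) ∈ K` is an admissible
test function in the variational inequality. -/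
lemma IsProjK.integral_comp_mul_sub_nonneg {f g s : ℝ → ℝ} {K : ℝ≥0} (hg : IsProjK f g)
    (hs : LipschitzWith K s) : 0 ≤ ∫ w in Ioo (0:ℝ) 1, s (g w) * (f w - g w) := by
  set ε : ℝ := (K + 1 : ℝ)⁻¹
  have hε : 0 < ε := by positivity
  have hεK : ε * K ≤ 1 := by
    rw [inv_mul_le_iff₀ (by positivity)]
    linarith
  have hz : (fun w => g w - ε * s (g w)) ∈ coneK :=
    ⟨(monotone_sub_mul_of_lipschitzWith hs hε.le hεK).comp_monotoneOn hg.1.1,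
      hg.1.2.sub ((hs.comp_memLp_of_isFiniteMeasure hg.1.2).const_mul ε)⟩
  have h := hg.2 _ hz
  have hint : ∀ w, (f w - g w) * (g w - ε * s (g w) - g w) = -ε * (s (g w) * (f w - g w)) := by
    intro w; ring
  simp only [hint, integral_const_mul] at h
  nlinarith

lemma IsProjK.integral_comp_le_of_subgradient {f g φ s : ℝ → ℝ} {K : ℝ≥0}
    (hf : MemLp f 2 μ01) (hg : IsProjK f g) (hs : LipschitzWith K s)
    (hsub : ∀ t x, φ t + s t * (x - t) ≤ φ x) (hφf : Integrable (fun w => φ (f w)) μ01)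
    (hφg : Integrable (fun w => φ (g w)) μ01) :
    ∫ w in Ioo (0:ℝ) 1, φ (g w) ≤ ∫ w in Ioo (0:ℝ) 1, φ (f w) := by
  have hprod : Integrable (fun w => s (g w) * (f w - g w)) μ01 :=
    (hs.comp_memLp_of_isFiniteMeasure hg.1.2).integrable_mul (hf.sub hg.1.2)
  calc ∫ w in Ioo (0:ℝ) 1, φ (g w)
      ≤ (∫ w in Ioo (0:ℝ) 1, φ (g w)) + ∫ w in Ioo (0:ℝ) 1, s (g w) * (f w - g w) :=
        le_add_of_nonneg_right (hg.integral_comp_mul_sub_nonneg hs)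
    _ = ∫ w in Ioo (0:ℝ) 1, (φ (g w) + s (g w) * (f w - g w)) := (integral_add hφg hprod).symm
    _ ≤ ∫ w in Ioo (0:ℝ) 1, φ (f w) :=
        integral_mono (hφg.add hprod) hφf fun w => hsub (g w) (f w)

lemma IsProjK.integral_comp_le {f g φ : ℝ → ℝ} {c : ℝ≥0} (hf : MemLp f 2 μ01)
    (hg : IsProjK f g) (hφ : ConvexOn ℝ univ φ) (hφc : ConvexOn ℝ univ fun x => c * x ^ 2 - φ x) :
    ∫ w in Ioo (0:ℝ) 1, φ (g w) ≤ ∫ w in Ioo (0:ℝ) 1, φ (f w) :=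
  hg.integral_comp_le_of_subgradient hf (hφ.lipschitzWith_rightDeriv hφc)
    hφ.add_rightDeriv_mul_sub_le (hφ.integrable_comp hφc hf) (hφ.integrable_comp hφc hg.1.2)

def moreauEnvelope (ψ : ℝ → ℝ≥0∞) (c : ℝ≥0) (x : ℝ) : ℝ≥0∞ :=
  ⨅ y, ψ y + ENNReal.ofReal (c * (x - y) ^ 2)

namespace moreauEnvelope

variable {ψ : ℝ → ℝ≥0∞} {y₀ : ℝ}

lemma le_self (c : ℝ≥0) (x : ℝ) : moreauEnvelope ψ c x ≤ ψ x :=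
  (iInf_le _ x).trans (by simp)

lemma monotone_param (x : ℝ) : Monotone fun c => moreauEnvelope ψ c x := fun _ _ hcd =>
  iInf_mono fun _ => add_le_add_right (ENNReal.ofReal_le_ofReal
    (mul_le_mul_of_nonneg_right (by exact_mod_cast hcd) (sq_nonneg _))) _

lemma ne_top (hy₀ : ψ y₀ ≠ ⊤) (c : ℝ≥0) (x : ℝ) : moreauEnvelope ψ c x ≠ ⊤ :=
  ne_top_of_le_ne_top (ENNReal.add_ne_top.2 ⟨hy₀, ENNReal.ofReal_ne_top⟩) (iInf_le _ y₀)

/-- Far from `x` the penalty `n (x - y)²` beats any level `c < ψ x`, and near `x` lower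
semicontinuity does. -/
lemma iSup_natCast (hψ : LowerSemicontinuous ψ) (x : ℝ) :
    ⨆ n : ℕ, moreauEnvelope ψ n x = ψ x := by
  refine le_antisymm (iSup_le fun n => le_self _ x) (le_of_forall_lt_imp_le_of_dense fun c hc => ?_)
  obtain ⟨δ, hδ, hball⟩ := Metric.eventually_nhds_iff.mp (hψ x c hc)
  obtain ⟨n, hn⟩ := exists_nat_ge (c.toReal / δ ^ 2)
  refine le_iSup_of_le n (le_iInf fun y => ?_)
  rcases lt_or_ge (dist y x) δ with hyx | hyx
  · exact (hball hyx).le.trans le_self_add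
  · refine le_add_left ?_
    rw [← ENNReal.ofReal_toReal hc.ne_top]
    refine ENNReal.ofReal_le_ofReal ?_
    have hδxy : δ ^ 2 ≤ (x - y) ^ 2 := by
      rw [← sq_abs (x - y), abs_sub_comm, ← Real.dist_eq]
      exact pow_le_pow_left₀ hδ.le hyx 2
    rw [div_le_iff₀ (by positivity)] at hn
    push_cast
    nlinarith [Nat.cast_nonneg (α := ℝ) n]

lemma convex (hψc : ∀ x y θ : ℝ, 0 ≤ θ → θ ≤ 1 →
      ψ (θ * x + (1 - θ) * y) ≤ ENNReal.ofReal θ * ψ x + ENNReal.ofReal (1 - θ) * ψ y)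
    (c : ℝ≥0) (x y : ℝ) {a b : ℝ} (ha : 0 ≤ a) (hb : 0 ≤ b) (hab : a + b = 1) :
    moreauEnvelope ψ c (a * x + b * y) ≤
      ENNReal.ofReal a * moreauEnvelope ψ c x + ENNReal.ofReal b * moreauEnvelope ψ c y := by
  obtain rfl : b = 1 - a := by linarith
  simp only [moreauEnvelope]
  rw [ENNReal.mul_iInf' (by simp) (fun _ => inferInstance),
    ENNReal.mul_iInf' (by simp) (fun _ => inferInstance), ENNReal.iInf_add]
  refine le_iInf fun u => ?_
  rw [ENNReal.add_iInf]
  refine le_iInf fun v => (iInf_le _ (a * u + (1 - a) * v)).trans ?_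
  have hpen : ENNReal.ofReal (c * (a * x + (1 - a) * y - (a * u + (1 - a) * v)) ^ 2) ≤
      ENNReal.ofReal a * ENNReal.ofReal (c * (x - u) ^ 2) +
      ENNReal.ofReal (1 - a) * ENNReal.ofReal (c * (y - v) ^ 2) := by
    rw [← ENNReal.ofReal_mul ha, ← ENNReal.ofReal_mul hb,
      ← ENNReal.ofReal_add (by positivity) (mul_nonneg hb (by positivity))]
    refine ENNReal.ofReal_le_ofReal ?_
    have hc : (0 : ℝ) ≤ c := c.2
    nlinarith [mul_nonneg (mul_nonneg ha hb) hc, sq_nonneg ((x - u) - (y - v))]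
  calc ψ (a * u + (1 - a) * v) +
        ENNReal.ofReal (c * (a * x + (1 - a) * y - (a * u + (1 - a) * v)) ^ 2)
      ≤ (ENNReal.ofReal a * ψ u + ENNReal.ofReal (1 - a) * ψ v) +
        (ENNReal.ofReal a * ENNReal.ofReal (c * (x - u) ^ 2) +
         ENNReal.ofReal (1 - a) * ENNReal.ofReal (c * (y - v) ^ 2)) :=
        add_le_add (hψc u v a ha (by linarith)) hpen
    _ = ENNReal.ofReal a * (ψ u + ENNReal.ofReal (c * (x - u) ^ 2)) +
        ENNReal.ofReal (1 - a) * (ψ v + ENNReal.ofReal (c * (y - v) ^ 2)) := by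
        rw [mul_add, mul_add]; ring

lemma semiconcave (c : ℝ≥0) (x y : ℝ) {a b : ℝ} (ha : 0 ≤ a) (hb : 0 ≤ b) (hab : a + b = 1) :
    ENNReal.ofReal a * moreauEnvelope ψ c x + ENNReal.ofReal b * moreauEnvelope ψ c y ≤
      moreauEnvelope ψ c (a * x + b * y) + ENNReal.ofReal (c * (a * b * (x - y) ^ 2)) := by
  conv_rhs => rw [moreauEnvelope, ENNReal.iInf_add]
  refine le_iInf fun z => ?_
  refine (add_le_add (mul_le_mul_right (iInf_le _ z) _) (mul_le_mul_right (iInf_le _ z) _)).trans ?_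
  rw [mul_add, mul_add, ← ENNReal.ofReal_mul ha, ← ENNReal.ofReal_mul hb,
    add_add_add_comm, ← add_mul, ← ENNReal.ofReal_add ha hb, hab, ENNReal.ofReal_one, one_mul,
    ← ENNReal.ofReal_add (by positivity) (by positivity), add_assoc,
    ← ENNReal.ofReal_add (by positivity) (by positivity)]
  refine le_of_eq (congrArg (ψ z + ENNReal.ofReal ·) ?_)
  obtain rfl : b = 1 - a := by linarith
  ring

lemma convexOn_toReal (hψc : ∀ x y θ : ℝ, 0 ≤ θ → θ ≤ 1 →
      ψ (θ * x + (1 - θ) * y) ≤ ENNReal.ofReal θ * ψ x + ENNReal.ofReal (1 - θ) * ψ y)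
    (hy₀ : ψ y₀ ≠ ⊤) (c : ℝ≥0) : ConvexOn ℝ univ fun x => (moreauEnvelope ψ c x).toReal := by
  refine ⟨convex_univ, fun x _ y _ a b ha hb hab => ?_⟩
  have h := convex hψc c x y ha hb hab
  rw [← ENNReal.ofReal_toReal (ne_top hy₀ c x), ← ENNReal.ofReal_toReal (ne_top hy₀ c y),
    ← ENNReal.ofReal_toReal (ne_top hy₀ c (a * x + b * y)), ← ENNReal.ofReal_mul ha,
    ← ENNReal.ofReal_mul hb, ← ENNReal.ofReal_add (by positivity) (by positivity),
    ENNReal.ofReal_le_ofReal_iff (by positivity)] at h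
  simpa using h

lemma convexOn_sq_sub_toReal (hy₀ : ψ y₀ ≠ ⊤) (c : ℝ≥0) :
    ConvexOn ℝ univ fun x => c * x ^ 2 - (moreauEnvelope ψ c x).toReal := by
  refine ⟨convex_univ, fun x _ y _ a b ha hb hab => ?_⟩
  have h := semiconcave (ψ := ψ) c x y ha hb hab
  rw [← ENNReal.ofReal_toReal (ne_top hy₀ c x), ← ENNReal.ofReal_toReal (ne_top hy₀ c y),
    ← ENNReal.ofReal_toReal (ne_top hy₀ c (a * x + b * y)), ← ENNReal.ofReal_mul ha,
    ← ENNReal.ofReal_mul hb, ← ENNReal.ofReal_add (by positivity) (by positivity),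
    ← ENNReal.ofReal_add (by positivity) (by positivity),
    ENNReal.ofReal_le_ofReal_iff (by positivity)] at h
  obtain rfl : b = 1 - a := by linarith
  simp only [smul_eq_mul]
  nlinarith

lemma continuous (hψc : ∀ x y θ : ℝ, 0 ≤ θ → θ ≤ 1 →
      ψ (θ * x + (1 - θ) * y) ≤ ENNReal.ofReal θ * ψ x + ENNReal.ofReal (1 - θ) * ψ y)
    (hy₀ : ψ y₀ ≠ ⊤) (c : ℝ≥0) : Continuous (moreauEnvelope ψ c) := by
  have h := (convexOn_toReal hψc hy₀ c).continuousOn isOpen_univ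
  rw [continuousOn_univ] at h
  convert ENNReal.continuous_ofReal.comp h using 1
  funext x
  exact (ENNReal.ofReal_toReal (ne_top hy₀ c x)).symm

lemma lintegral_comp_le_of_isProjK (hψc : ∀ x y θ : ℝ, 0 ≤ θ → θ ≤ 1 →
      ψ (θ * x + (1 - θ) * y) ≤ ENNReal.ofReal θ * ψ x + ENNReal.ofReal (1 - θ) * ψ y)
    (hy₀ : ψ y₀ ≠ ⊤) {f g : ℝ → ℝ} (hf : MemLp f 2 μ01) (hg : IsProjK f g) (c : ℝ≥0) :
    ∫⁻ w in Ioo (0:ℝ) 1, moreauEnvelope ψ c (g w) ≤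
      ∫⁻ w in Ioo (0:ℝ) 1, moreauEnvelope ψ c (f w) := by
  have hconv := convexOn_toReal hψc hy₀ c
  have hsemi := convexOn_sq_sub_toReal hy₀ c
  have hofReal : ∀ u : ℝ → ℝ, ∫⁻ w in Ioo (0:ℝ) 1, moreauEnvelope ψ c (u w) =
      ∫⁻ w in Ioo (0:ℝ) 1, ENNReal.ofReal (moreauEnvelope ψ c (u w)).toReal := fun u =>
    lintegral_congr fun w => (ENNReal.ofReal_toReal (ne_top hy₀ c (u w))).symm
  have hint : ∀ u : ℝ → ℝ, MemLp u 2 μ01 → Integrable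
      (fun w => (moreauEnvelope ψ c (u w)).toReal) (volume.restrict (Ioo 0 1)) := fun u hu =>
    hconv.integrable_comp hsemi hu
  rw [hofReal g, hofReal f,
    ← ofReal_integral_eq_lintegral_ofReal (hint g hg.1.2) (ae_of_all _ fun _ => by positivity),
    ← ofReal_integral_eq_lintegral_ofReal (hint f hf) (ae_of_all _ fun _ => by positivity)]
  exact ENNReal.ofReal_le_ofReal (hg.integral_comp_le hf hconv hsemi)

end moreauEnvelope

theorem stmt6 (ψ : ℝ → ENNReal) (f g : ℝ → ℝ)
    (hψc : ∀ x y θ : ℝ, 0 ≤ θ → θ ≤ 1 →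
      ψ (θ * x + (1 - θ) * y) ≤ ENNReal.ofReal θ * ψ x + ENNReal.ofReal (1 - θ) * ψ y)
    (hψl : LowerSemicontinuous ψ)
    (hf : MeasureTheory.MemLp f 2 μ01) (hg : IsProjK f g) :
    (∫⁻ w in Set.Ioo (0:ℝ) 1, ψ (g w)) ≤ ∫⁻ w in Set.Ioo (0:ℝ) 1, ψ (f w) := by
  by_cases hψtop : ∀ y, ψ y = ⊤
  · simp [hψtop]
  obtain ⟨y₀, hy₀⟩ := not_forall.1 hψtop
  have hmeas : ∀ n : ℕ, AEMeasurable (fun w => moreauEnvelope ψ n (g w)) μ01 := fun n =>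
    (moreauEnvelope.continuous hψc hy₀ n).measurable.comp_aemeasurable
      hg.1.2.aestronglyMeasurable.aemeasurable
  calc ∫⁻ w in Ioo (0:ℝ) 1, ψ (g w)
      = ∫⁻ w in Ioo (0:ℝ) 1, ⨆ n : ℕ, moreauEnvelope ψ n (g w) := by
        simp only [moreauEnvelope.iSup_natCast hψl]
    _ = ⨆ n : ℕ, ∫⁻ w in Ioo (0:ℝ) 1, moreauEnvelope ψ n (g w) :=
        lintegral_iSup' hmeas (ae_of_all _ fun w _ _ hmn =>
          moreauEnvelope.monotone_param (g w) (Nat.cast_le.2 hmn))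
    _ ≤ ⨆ n : ℕ, ∫⁻ w in Ioo (0:ℝ) 1, moreauEnvelope ψ n (f w) :=
        iSup_mono fun n => moreauEnvelope.lintegral_comp_le_of_isProjK hψc hy₀ hf hg n
    _ ≤ ∫⁻ w in Ioo (0:ℝ) 1, ψ (f w) :=
        iSup_le fun n => lintegral_mono fun w => moreauEnvelope.le_self n (f w)
end
end

section
/- A function f ∈ L²(0,1) belongs to the polar cone K° of the cone K of nondecreasing functions if and only if its primitive F(w) = ∫₀ʷ f(s) ds satisfies F ≥ 0 on [0,1] and F(0) = F(1) = 0. -/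
open MeasureTheory Set Filter

noncomputable section

open Topology

/-!
Testing against the nondecreasing functions `±1` and `𝟙_(t,∞)` gives `F 1 = 0` and
`F 1 - F t ≤ 0`. Conversely, a right-continuous nondecreasing `g` is `g 0` plus the distribution
function of its Stieltjes measure `ν`, so by Fubini
`∫₀¹ f g = g 0 · F 1 + ∫_(0,1] (F 1 - F t) dν(t) ≤ 0`. A monotone function agrees a.e. with its
right-continuous modification, and a general `z ∈ K` is the dominated limit of `z` composed with
the clamp of `ℝ` onto `[ε, 1 - ε]`, which is nondecreasing on all of `ℝ`.
-/

theorem setIntegral_Ioc_mul_stieltjesFunction (g : StieltjesFunction ℝ) {f : ℝ → ℝ} {a b : ℝ}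
    (hf : IntegrableOn f (Ioc a b)) :
    ∫ w in Ioc a b, f w * g w =
      g a * (∫ w in Ioc a b, f w) + ∫ t in Ioc a b, (∫ w in Icc t b, f w) ∂g.measure := by
  set ν := g.measure.restrict (Ioc a b)
  have : IsFiniteMeasure ν := ⟨by simp [ν, g.measure_Ioc]⟩
  set G : ℝ × ℝ → ℝ := {p | p.2 ≤ p.1}.indicator fun p ↦ f p.1
  have hG : Integrable G ((volume.restrict (Ioc a b)).prod ν) :=
    (hf.comp_fst ν).indicator (measurableSet_le measurable_snd measurable_fst)
  have hslice : ∀ w ∈ Ioc a b, f w * g w = g a * f w + ∫ t, G (w, t) ∂ν := by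
    intro w hw
    have hmeas : ν (Iic w) = ENNReal.ofReal (g w - g a) := by
      rw [Measure.restrict_apply measurableSet_Iic, Iic_inter_Ioc_of_le hw.2, g.measure_Ioc]
    have hG_slice : (fun t ↦ G (w, t)) = (Iic w).indicator fun _ ↦ f w := by
      ext t; simp [G, indicator_apply]
    rw [hG_slice, integral_indicator_const _ measurableSet_Iic, measureReal_def, hmeas,
      ENNReal.toReal_ofReal (sub_nonneg.2 (g.mono hw.1.le)), smul_eq_mul]
    ring
  have hfiber : ∀ t ∈ Ioc a b, ∫ w in Ioc a b, G (w, t) = ∫ w in Icc t b, f w := by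
    intro t ht
    have hset : Ici t ∩ Ioc a b = Icc t b := by
      ext x
      simp only [mem_inter_iff, mem_Ici, mem_Ioc, mem_Icc]
      exact ⟨fun h ↦ ⟨h.1, h.2.2⟩, fun h ↦ ⟨h.1, ht.1.trans_le h.1, h.2⟩⟩
    have hG_fiber : (fun w ↦ G (w, t)) = (Ici t).indicator f := by
      ext w; simp [G, indicator_apply]
    rw [hG_fiber, integral_indicator measurableSet_Ici, Measure.restrict_restrict measurableSet_Ici,
      hset]
  calc ∫ w in Ioc a b, f w * g w
      = ∫ w in Ioc a b, (g a * f w + ∫ t, G (w, t) ∂ν) :=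
        setIntegral_congr_fun measurableSet_Ioc hslice
    _ = g a * (∫ w in Ioc a b, f w) + ∫ w in Ioc a b, ∫ t, G (w, t) ∂ν := by
      rw [integral_add (hf.const_mul _) hG.integral_prod_left, integral_const_mul]
    _ = g a * (∫ w in Ioc a b, f w) + ∫ t in Ioc a b, (∫ w in Icc t b, f w) ∂g.measure := by
      rw [integral_integral_swap (f := fun w t ↦ G (w, t)) hG]
      exact congrArg _ (setIntegral_congr_fun measurableSet_Ioc hfiber)

theorem Monotone.ae_eq_stieltjesFunction {g : ℝ → ℝ} (hg : Monotone g) :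
    g =ᵐ[volume] hg.stieltjesFunction := by
  filter_upwards [hg.countable_not_continuousAt.ae_notMem volume] with x hx
  exact (rightLim_eq_of_tendsto ((not_not.1 hx).tendsto.mono_left nhdsWithin_le_nhds)).symm

theorem MonotoneOn.abs_le_add_of_mem_uIcc {α : Type*} [LinearOrder α] {z : α → ℝ} {s : Set α}
    [s.OrdConnected] (hz : MonotoneOn z s) {x m y : α} (hx : x ∈ s) (hm : m ∈ s)
    (hy : y ∈ uIcc x m) : |z y| ≤ |z x| + |z m| := by
  have hys : y ∈ s := Set.OrdConnected.uIcc_subset ‹_› hx hm hy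
  rw [abs_le]
  rcases le_total x m with h | h
  · rw [uIcc_of_le h] at hy
    have := hz hx hys hy.1; have := hz hys hm hy.2
    constructor <;> linarith [neg_abs_le (z x), le_abs_self (z m), abs_nonneg (z x),
      abs_nonneg (z m)]
  · rw [uIcc_of_ge h] at hy
    have := hz hm hys hy.1; have := hz hys hx hy.2
    constructor <;> linarith [neg_abs_le (z m), le_abs_self (z x), abs_nonneg (z x),
      abs_nonneg (z m)]

theorem max_min_mem_uIcc {a b m : ℝ} (x : ℝ) (ham : a ≤ m) (hmb : m ≤ b) :
    max a (min b x) ∈ uIcc x m := by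
  rcases le_total x m with h | h
  · rw [uIcc_of_le h]; constructor
    · exact le_max_of_le_right (le_min (h.trans hmb) le_rfl)
    · exact max_le ham (min_le_of_right_le h)
  · rw [uIcc_of_ge h]; constructor
    · exact le_max_of_le_right (le_min hmb h)
    · exact max_le (ham.trans h) (min_le_right _ _)

theorem intervalIntegral_mul_nonpos_of_monotone {f g : ℝ → ℝ} {a b : ℝ} (hab : a ≤ b)
    (hg : Monotone g) (hf : IntervalIntegrable f volume a b) (htotal : ∫ w in a..b, f w = 0)
    (htail : ∀ t ∈ Ioc a b, ∫ w in t..b, f w ≤ 0) : ∫ w in a..b, f w * g w ≤ 0 := by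
  rw [intervalIntegral.integral_of_le hab] at htotal ⊢
  calc ∫ w in Ioc a b, f w * g w = ∫ w in Ioc a b, f w * hg.stieltjesFunction w :=
        integral_congr_ae ((ae_restrict_of_ae hg.ae_eq_stieltjesFunction).mono fun w hw ↦
          congrArg (f w * ·) hw)
    _ = ∫ t in Ioc a b, (∫ w in Icc t b, f w) ∂hg.stieltjesFunction.measure := by
        rw [setIntegral_Ioc_mul_stieltjesFunction _
          ((intervalIntegrable_iff_integrableOn_Ioc_of_le hab).1 hf), htotal, mul_zero, zero_add]
    _ ≤ 0 := setIntegral_nonpos measurableSet_Ioc fun t ht ↦ by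
        rw [integral_Icc_eq_integral_Ioc, ← intervalIntegral.integral_of_le ht.2]
        exact htail t ht

theorem setIntegral_Ioo_mul_nonpos_of_monotoneOn {f z : ℝ → ℝ} {a b : ℝ} (hab : a < b)
    (hz : MonotoneOn z (Ioo a b)) (hf : IntervalIntegrable f volume a b)
    (hfz : IntegrableOn (fun w ↦ f w * z w) (Ioo a b)) (htotal : ∫ w in a..b, f w = 0)
    (htail : ∀ t ∈ Ioc a b, ∫ w in t..b, f w ≤ 0) : ∫ w in Ioo a b, f w * z w ≤ 0 := by
  set m := (a + b) / 2 with hm_def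
  have hm : m ∈ Ioo a b := ⟨by linarith, by linarith⟩
  set clamp : ℝ → ℝ → ℝ := fun ε x ↦ max (a + ε) (min (b - ε) x)
  have hsmall : Ioo 0 ((b - a) / 2) ∈ 𝓝[>] 0 := Ioo_mem_nhdsGT (by linarith)
  have hclamp_mem : ∀ ε ∈ Ioo 0 ((b - a) / 2), ∀ x, clamp ε x ∈ Ioo a b := fun ε hε x ↦
    ⟨(lt_add_of_pos_right a hε.1).trans_le (le_max_left _ _),
      max_lt (by linarith [hε.2]) ((min_le_left _ _).trans_lt (by linarith [hε.1]))⟩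
  have hmono : ∀ ε ∈ Ioo 0 ((b - a) / 2), Monotone (z ∘ clamp ε) := fun ε hε x y hxy ↦
    hz (hclamp_mem ε hε x) (hclamp_mem ε hε y) (max_le_max le_rfl (min_le_min le_rfl hxy))
  have hf' : IntegrableOn f (Ioo a b) :=
    (intervalIntegrable_iff_integrableOn_Ioo_of_le hab.le).1 hf
  have hlim : Tendsto (fun ε ↦ ∫ w in Ioo a b, f w * z (clamp ε w)) (𝓝[>] 0)
      (𝓝 (∫ w in Ioo a b, f w * z w)) := by
    refine tendsto_integral_filter_of_dominated_convergence (fun w ↦ |f w * z w| + |f w| * |z m|)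
      ?_ ?_ (hfz.abs.add (hf'.abs.mul_const _)) ?_
    · filter_upwards [hsmall] with ε hε
      exact hf'.1.mul (hmono ε hε).measurable.aestronglyMeasurable
    · filter_upwards [hsmall] with ε hε
      filter_upwards [ae_restrict_mem measurableSet_Ioo] with x hx
      have hclamp : clamp ε x ∈ uIcc x m :=
        max_min_mem_uIcc x (by linarith [hε.2]) (by linarith [hε.2])
      rw [Real.norm_eq_abs, abs_mul, abs_mul, ← mul_add]
      exact mul_le_mul_of_nonneg_left (hz.abs_le_add_of_mem_uIcc hx hm hclamp) (abs_nonneg _)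
    · filter_upwards [ae_restrict_mem measurableSet_Ioo] with x hx
      refine tendsto_const_nhds.congr' ?_
      filter_upwards [Ioo_mem_nhdsGT (lt_min (sub_pos.2 hx.1) (sub_pos.2 hx.2))] with ε hε
      obtain ⟨hεa, hεb⟩ := lt_min_iff.1 hε.2
      rw [show clamp ε x = x from by
        simp only [clamp]; rw [min_eq_right (by linarith), max_eq_right (by linarith)]]
  refine le_of_tendsto hlim ?_
  filter_upwards [hsmall] with ε hε
  have := intervalIntegral_mul_nonpos_of_monotone hab.le (hmono ε hε) hf htotal htail
  rwa [intervalIntegral.integral_of_le hab.le, integral_Ioc_eq_integral_Ioo] at this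

instance inst_s8 : IsFiniteMeasure μ01 := isFiniteMeasure_restrict.2 (by simp)

theorem const_mem_coneK (c : ℝ) : (fun _ ↦ c) ∈ coneK :=
  ⟨monotoneOn_const, memLp_const c⟩

theorem indicator_Ioi_one_mem_coneK (t : ℝ) : (Ioi t).indicator (fun _ ↦ (1 : ℝ)) ∈ coneK := by
  refine ⟨fun x _ y _ hxy ↦ ?_, (memLp_const 1).indicator measurableSet_Ioi⟩
  by_cases hx : t < x
  · simp [hx, hx.trans_le hxy]
  · by_cases hy : t < y <;> simp [hx, hy]

theorem setIntegral_Ioo_mul_indicator_Ioi_one {f : ℝ → ℝ} {a b t : ℝ} (ht : t ∈ Icc a b) :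
    ∫ w in Ioo a b, f w * (Ioi t).indicator (fun _ ↦ 1) w = ∫ w in t..b, f w := by
  have hset : Ioi t ∩ Ioo a b = Ioo t b := by
    ext w
    simp only [mem_inter_iff, mem_Ioi, mem_Ioo]
    exact ⟨fun h ↦ ⟨h.1, h.2.2⟩, fun h ↦ ⟨h.1, ht.1.trans_lt h.1, h.2⟩⟩
  calc ∫ w in Ioo a b, f w * (Ioi t).indicator (fun _ ↦ 1) w
      = ∫ w in Ioo a b, (Ioi t).indicator f w := by
        congr 1; ext w; by_cases hw : t < w <;> simp [hw]
    _ = ∫ w in t..b, f w := by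
      rw [integral_indicator measurableSet_Ioi, Measure.restrict_restrict measurableSet_Ioi, hset,
        intervalIntegral.integral_of_le ht.2, integral_Ioc_eq_integral_Ioo]

theorem stmt8 (f F : ℝ → ℝ) (hf : MeasureTheory.MemLp f 2 μ01)
    (hF : ∀ w, F w = ∫ s in (0:ℝ)..w, f s) :
    (∀ z ∈ coneK, (∫ w in Set.Ioo (0:ℝ) 1, f w * z w) ≤ 0) ↔
      ((∀ w ∈ Set.Icc (0:ℝ) 1, 0 ≤ F w) ∧ F 0 = 0 ∧ F 1 = 0) := by
  have hf01 : IntervalIntegrable f volume 0 1 :=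
    (intervalIntegrable_iff_integrableOn_Ioo_of_le zero_le_one).2 (hf.integrable one_le_two)
  have htail : ∀ t ∈ Icc (0:ℝ) 1, ∫ w in t..1, f w = F 1 - F t := fun t ht ↦ by
    rw [hF, hF, intervalIntegral.integral_interval_sub_left hf01
      (hf01.mono_set (uIcc_subset_uIcc_left (by rwa [uIcc_of_le zero_le_one])))]
  have hF0 : F 0 = 0 := by simp [hF]
  constructor
  · intro hK
    have hle : ∀ t ∈ Icc (0:ℝ) 1, F 1 ≤ F t := fun t ht ↦ by
      have := hK _ (indicator_Ioi_one_mem_coneK t)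
      rw [setIntegral_Ioo_mul_indicator_Ioi_one ht, htail t ht] at this
      linarith
    have hge : 0 ≤ F 1 := by
      have := hK _ (const_mem_coneK (-1))
      simp only [mul_neg_one, integral_neg, neg_nonpos] at this
      rwa [← integral_Ioc_eq_integral_Ioo, ← intervalIntegral.integral_of_le zero_le_one,
        ← hF] at this
    have hF1 : F 1 = 0 := le_antisymm (hF0 ▸ hle 0 ⟨le_rfl, zero_le_one⟩) hge
    exact ⟨fun t ht ↦ hF1 ▸ hle t ht, hF0, hF1⟩
  · rintro ⟨hpos, -, hF1⟩ z ⟨hz, hz2⟩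
    refine setIntegral_Ioo_mul_nonpos_of_monotoneOn zero_lt_one hz hf01
      (hf.integrable_mul hz2) (by rw [← hF, hF1]) fun t ht ↦ ?_
    have ht' : t ∈ Icc (0:ℝ) 1 := Ioc_subset_Icc_self ht
    rw [htail t ht', hF1]
    linarith [hpos t ht']
end
end

section
/- For X ∈ K (a nondecreasing function in L²(0,1)) and Y ∈ L²(0,1), Y is essentially constant on each open interval where X is essentially constant if and only if Y = y ∘ X almost everywhere for some Borel map y ∈ L²_ρ(ℝ), where ρ = X_#λ is the pushforward of Lebesgue measure on (0,1) under X. -/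
open MeasureTheory Set Filter

noncomputable section

/-! Every value `t` taken by a nondecreasing `X` on a set of positive length is taken on an
interval `(lowerInv X t, upperInv X t)`, and there are only countably many such `t`. Given `Y`
constant on each of these intervals, set `y t` to be that constant for such `t`, and `Y` at the
unique preimage otherwise; `y ∘ X = Y` except at the countably many interval endpoints, and `y`
is measurable because off a countable set it is a measurable function of the monotone
`lowerInv X`. -/

section GeneralizedInverse

variable (X : ℝ → ℝ)

/-- The singletons `{1}` and `{0}` only keep the sets nonempty, so that both inverses take
values in `[0,1]`. -/
def lowerInv (t : ℝ) : ℝ := sInf ({w | w ∈ Ioo 0 1 ∧ t ≤ X w} ∪ {1})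

def upperInv (t : ℝ) : ℝ := sSup ({w | w ∈ Ioo 0 1 ∧ X w ≤ t} ∪ {0})

def plateauValues : Set ℝ := {t | lowerInv X t < upperInv X t}

lemma bddBelow_lowerInv_set (t : ℝ) :
    BddBelow ({w | w ∈ Ioo (0 : ℝ) 1 ∧ t ≤ X w} ∪ {1}) :=
  ⟨0, by rintro w (hw | rfl); exacts [hw.1.1.le, zero_le_one]⟩

lemma bddAbove_upperInv_set (t : ℝ) :
    BddAbove ({w | w ∈ Ioo (0 : ℝ) 1 ∧ X w ≤ t} ∪ {0}) :=
  ⟨1, by rintro w (hw | rfl); exacts [hw.1.2.le, zero_le_one]⟩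

lemma lowerInv_nonneg (t : ℝ) : 0 ≤ lowerInv X t :=
  le_csInf ⟨1, Or.inr rfl⟩ (by rintro w (hw | rfl); exacts [hw.1.1.le, zero_le_one])

lemma upperInv_le_one (t : ℝ) : upperInv X t ≤ 1 :=
  csSup_le ⟨0, Or.inr rfl⟩ (by rintro w (hw | rfl); exacts [hw.1.2.le, zero_le_one])

lemma lowerInv_le {w : ℝ} (hw : w ∈ Ioo (0 : ℝ) 1) : lowerInv X (X w) ≤ w :=
  csInf_le (bddBelow_lowerInv_set X _) (Or.inl ⟨hw, le_rfl⟩)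

lemma le_upperInv {w : ℝ} (hw : w ∈ Ioo (0 : ℝ) 1) : w ≤ upperInv X (X w) :=
  le_csSup (bddAbove_upperInv_set X _) (Or.inl ⟨hw, le_rfl⟩)

lemma monotone_lowerInv : Monotone (lowerInv X) := by
  intro t t' htt'
  refine csInf_le_csInf (bddBelow_lowerInv_set X t) ⟨1, Or.inr rfl⟩ ?_
  rintro w (hw | hw)
  exacts [Or.inl ⟨hw.1, htt'.trans hw.2⟩, Or.inr hw]

lemma mem_Ioo_of_lowerInv_lt_of_lt_upperInv {t u : ℝ} (h₁ : lowerInv X t < u)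
    (h₂ : u < upperInv X t) : u ∈ Ioo (0 : ℝ) 1 :=
  ⟨(lowerInv_nonneg X t).trans_lt h₁, h₂.trans_le (upperInv_le_one X t)⟩

lemma exists_lt_of_lowerInv_lt {t u : ℝ} (h : lowerInv X t < u) (hu : u ≤ 1) :
    ∃ v ∈ Ioo (0 : ℝ) 1, t ≤ X v ∧ v < u := by
  obtain ⟨v, hv | rfl, hvu⟩ :=
    exists_lt_of_csInf_lt ((singleton_nonempty _).mono subset_union_right) h
  exacts [⟨v, hv.1, hv.2, hvu⟩, absurd hvu hu.not_gt]

lemma exists_gt_of_lt_upperInv {t u : ℝ} (h : u < upperInv X t) (hu : 0 ≤ u) :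
    ∃ v ∈ Ioo (0 : ℝ) 1, X v ≤ t ∧ u < v := by
  obtain ⟨v, hv | rfl, huv⟩ :=
    exists_lt_of_lt_csSup ((singleton_nonempty _).mono subset_union_right) h
  exacts [⟨v, hv.1, hv.2, huv⟩, absurd huv hu.not_gt]

variable {X}

lemma eq_of_lowerInv_lt_of_lt_upperInv (hX : MonotoneOn X (Ioo 0 1)) {t u : ℝ}
    (h₁ : lowerInv X t < u) (h₂ : u < upperInv X t) : X u = t := by
  have hu := mem_Ioo_of_lowerInv_lt_of_lt_upperInv X h₁ h₂
  obtain ⟨v, hv, hXv, huv⟩ := exists_gt_of_lt_upperInv X h₂ hu.1.le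
  obtain ⟨v', hv', hXv', hvu'⟩ := exists_lt_of_lowerInv_lt X h₁ hu.2.le
  exact le_antisymm ((hX hu hv huv.le).trans hXv) (hXv'.trans (hX hv' hu hvu'.le))

lemma countable_plateauValues (hX : MonotoneOn X (Ioo 0 1)) : (plateauValues X).Countable := by
  refine (countable_range fun r : ℚ => X r).mono fun t ht => ?_
  obtain ⟨r, hr₁, hr₂⟩ := exists_rat_btwn (show lowerInv X t < upperInv X t from ht)
  exact ⟨r, eq_of_lowerInv_lt_of_lt_upperInv hX hr₁ hr₂⟩

lemma lowerInv_eq_of_notMem_plateauValues {w : ℝ} (hw : w ∈ Ioo (0 : ℝ) 1)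
    (h : X w ∉ plateauValues X) : lowerInv X (X w) = w :=
  le_antisymm (lowerInv_le X hw) ((le_upperInv X hw).trans (not_lt.mp h))

end GeneralizedInverse

instance : NullSingletonClass μ01 := by
  unfold μ01
  infer_instance

theorem exists_measurable_ae_eq_comp_of_monotoneOn {X Y : ℝ → ℝ} (hX : MonotoneOn X (Ioo 0 1))
    (hY : AEMeasurable Y μ01)
    (hY_const : ∀ t ∈ plateauValues X, ∃ c : ℝ,
      ∀ᵐ w ∂μ01, w ∈ Ioo (lowerInv X t) (upperInv X t) → Y w = c) :
    ∃ y : ℝ → ℝ, Measurable y ∧ ∀ᵐ w ∂μ01, Y w = y (X w) := by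
  classical
  set P := plateauValues X
  choose c hc using hY_const
  have hP : P.Countable := countable_plateauValues hX
  let y : ℝ → ℝ := fun t => if ht : t ∈ P then c t ht else hY.mk Y (lowerInv X t)
  have hy : Measurable y := by
    refine (hY.measurable_mk.comp (monotone_lowerInv X).measurable).measurable_of_countable_ne
      (hP.mono fun t ht => ?_)
    by_contra htP
    exact ht (by simp [y, htP])
  refine ⟨y, hy, ?_⟩
  have hendpoints : (lowerInv X '' P ∪ upperInv X '' P).Countable :=
    (hP.image _).union (hP.image _)
  filter_upwards [ae_restrict_mem measurableSet_Ioo, hendpoints.ae_notMem μ01,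
    (ae_ball_iff hP).mpr hc, hY.ae_eq_mk] with w hw hwE hYc hYw
  by_cases hXw : X w ∈ P
  · have hlt : lowerInv X (X w) < w := (lowerInv_le X hw).lt_of_ne
      fun h => hwE (Or.inl ⟨X w, hXw, h⟩)
    have hgt : w < upperInv X (X w) := (le_upperInv X hw).lt_of_ne
      fun h => hwE (Or.inr ⟨X w, hXw, h.symm⟩)
    simpa [y, hXw] using hYc (X w) hXw ⟨hlt, hgt⟩
  · simpa [y, hXw, lowerInv_eq_of_notMem_plateauValues hw hXw] using hYw

theorem stmt14 (X Y : ℝ → ℝ) (hX : X ∈ coneK) (hXm : Measurable X)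
    (hY : MeasureTheory.MemLp Y 2 μ01) :
    (∀ a b : ℝ, Set.Ioo a b ⊆ Set.Ioo (0:ℝ) 1 →
      (∃ c : ℝ, ∀ᵐ w ∂μ01, w ∈ Set.Ioo a b → X w = c) →
      ∃ c : ℝ, ∀ᵐ w ∂μ01, w ∈ Set.Ioo a b → Y w = c) ↔
    ∃ y : ℝ → ℝ, Measurable y ∧
      MeasureTheory.MemLp y 2 (MeasureTheory.Measure.map X μ01) ∧
      ∀ᵐ w ∂μ01, Y w = y (X w) := by
  constructor
  · intro hY_const
    obtain ⟨y, hy, hYy⟩ := exists_measurable_ae_eq_comp_of_monotoneOn hX.1 hY.1.aemeasurable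
      fun t _ => hY_const _ _ (fun u hu => mem_Ioo_of_lowerInv_lt_of_lt_upperInv X hu.1 hu.2)
        ⟨t, ae_of_all _ fun u hu => eq_of_lowerInv_lt_of_lt_upperInv hX.1 hu.1 hu.2⟩
    refine ⟨y, hy, ?_, hYy⟩
    rw [memLp_map_measure_iff hy.aestronglyMeasurable hXm.aemeasurable]
    exact hY.ae_eq hYy
  · rintro ⟨y, -, -, hYy⟩ a b - ⟨c, hc⟩
    refine ⟨y c, ?_⟩
    filter_upwards [hYy, hc] with w hYw hXw hw
    rw [hYw, hXw hw]
end
end
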